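/- Let n ≥ 3 be odd, S = {a, a^{-1}, a^2 b, b} ⊆ D_{2n}, and Γ = Cay(D_{2n}, S). Then the transposition τ = (1, ab) is an automorphism of Γ, and R(D_{2n}) is not normal in Aut(Γ). -/
import Mathlib


open DihedralGroup

/-- The automorphism group of the Cayley (di)graph `Cay(G,S)`, as a subgroup of `Sym(G)`. -/
def cayleyAut (G : Type*) [Group G] (S : Set G) : Subgroup (Equiv.Perm G) where
  carrier := {f | ∀ x y : G, y * x⁻¹ ∈ S ↔ f y * (f x)⁻¹ ∈ S}
  one_mem' := by intro x y; rfl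
  mul_mem' := by
    intro f g hf hg x y
    exact (hg x y).trans (hf (g x) (g y))
  inv_mem' := by
    intro f hf x y
    have h := hf (f⁻¹ x) (f⁻¹ y)
    simpa using h.symm

/-- The right regular representation of `G` in `Sym(G)`, as a homomorphism. -/
def rightRegHom (G : Type*) [Group G] : G →* Equiv.Perm G where
  toFun g := Equiv.mulRight g⁻¹
  map_one' := by ext x; simp
  map_mul' a b := by ext x; simp [mul_assoc]

/-- The subgroup `R(G) ≤ Sym(G)` of all right translations. -/
def rightRegRep (G : Type*) [Group G] : Subgroup (Equiv.Perm G) := (rightRegHom G).range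

/-- `S = {a, a⁻¹, a²b, b}`. -/
def stdS (n : ℕ) : Set (DihedralGroup n) :=
  {DihedralGroup.r 1, (DihedralGroup.r 1)⁻¹,
    DihedralGroup.r 1 ^ 2 * DihedralGroup.sr 0, DihedralGroup.sr 0}

private lemma r_inv' {n : ℕ} (i : ZMod n) : (r i)⁻¹ = r (-i) := rfl
private lemma sr_inv' {n : ℕ} (i : ZMod n) : (sr i)⁻¹ = sr i := rfl

private lemma stdS_eq (n : ℕ) :
    stdS n = {r 1, r (-1), sr (-2), sr (0 : ZMod n)} := by
  have h1 : (r (1 : ZMod n))⁻¹ = r (-1) := rfl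
  have h2 : (r (1 : ZMod n)) ^ 2 * sr 0 = sr (-2) := by
    rw [pow_two, r_mul_r, r_mul_sr]
    norm_num
  unfold stdS
  rw [h1, h2]

private lemma mem_stdS_iff {n : ℕ} (z : DihedralGroup n) :
    z ∈ stdS n ↔ z = r 1 ∨ z = r (-1) ∨ z = sr (-2) ∨ z = sr 0 := by
  rw [stdS_eq]
  simp [Set.mem_insert_iff]

private lemma hL_fwd {n : ℕ} (z : DihedralGroup n) (h : z ∈ stdS n) :
    z * sr (-1) ∈ stdS n := by
  rw [mem_stdS_iff] at h ⊢
  rcases h with h | h | h | h <;> subst h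
  · refine Or.inr (Or.inr (Or.inl ?_))
    rw [r_mul_sr]; norm_num
  · refine Or.inr (Or.inr (Or.inr ?_))
    rw [r_mul_sr]; norm_num
  · refine Or.inl ?_
    rw [sr_mul_sr]; norm_num
  · refine Or.inr (Or.inl ?_)
    rw [sr_mul_sr]; norm_num

private lemma sr_neg_one_sq {n : ℕ} : sr (-1 : ZMod n) * sr (-1) = 1 := by
  rw [sr_mul_sr, sub_self]; rfl

private lemma hL {n : ℕ} (z : DihedralGroup n) :
    z ∈ stdS n ↔ z * sr (-1) ∈ stdS n := by
  constructor
  · exact hL_fwd z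
  · intro h
    have := hL_fwd _ h
    rwa [mul_assoc, sr_neg_one_sq, mul_one] at this

private lemma hL'_fwd {n : ℕ} (z : DihedralGroup n) (h : z ∈ stdS n) :
    sr (-1) * z ∈ stdS n := by
  rw [mem_stdS_iff] at h ⊢
  rcases h with h | h | h | h <;> subst h
  · refine Or.inr (Or.inr (Or.inr ?_))
    rw [sr_mul_r]; norm_num
  · refine Or.inr (Or.inr (Or.inl ?_))
    rw [sr_mul_r]; norm_num
  · refine Or.inr (Or.inl ?_)
    rw [sr_mul_sr]; norm_num
  · refine Or.inl ?_
    rw [sr_mul_sr]; norm_num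

private lemma hL' {n : ℕ} (z : DihedralGroup n) :
    z ∈ stdS n ↔ sr (-1) * z ∈ stdS n := by
  constructor
  · exact hL'_fwd z
  · intro h
    have := hL'_fwd _ h
    rwa [← mul_assoc, sr_neg_one_sq, one_mul] at this

/-- Let `n ≥ 3` be odd, `S = {a, a⁻¹, a²b, b}` and `Γ = Cay(D_{2n}, S)`. Then the
transposition `τ = (1, ab)` is an automorphism of `Γ`, and `R(D_{2n})` is not normal
in `Aut(Γ)`. -/
theorem cayley_dihedral_not_normal (n : ℕ) (hn : 3 ≤ n) (hodd : Odd n) :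
    Equiv.swap (1 : DihedralGroup n) (DihedralGroup.r 1 * DihedralGroup.sr 0) ∈
      cayleyAut (DihedralGroup n) (stdS n) ∧
    ¬ (∀ f ∈ cayleyAut (DihedralGroup n) (stdS n), ∀ p ∈ rightRegRep (DihedralGroup n),
        f * p * f⁻¹ ∈ rightRegRep (DihedralGroup n)) := by
  haveI : NeZero n := ⟨by omega⟩
  have h1 : (1 : ZMod n) ≠ 0 := by
    have : ¬ ((1 : ℕ) : ZMod n) = 0 := by
      rw [ZMod.natCast_eq_zero_iff]
      intro h; have := Nat.le_of_dvd (by norm_num) h; omega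
    simpa using this
  have h2 : (2 : ZMod n) ≠ 0 := by
    have : ¬ ((2 : ℕ) : ZMod n) = 0 := by
      rw [ZMod.natCast_eq_zero_iff]
      intro h; have := Nat.le_of_dvd (by norm_num) h; omega
    simpa using this
  have hab : DihedralGroup.r 1 * DihedralGroup.sr 0 = sr (-1 : ZMod n) := by
    rw [r_mul_sr]; norm_num
  set t : Equiv.Perm (DihedralGroup n) :=
    Equiv.swap (1 : DihedralGroup n) (DihedralGroup.r 1 * DihedralGroup.sr 0) with ht
  have hone_ne : (1 : DihedralGroup n) ≠ sr (-1 : ZMod n) := by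
    rw [one_def]; exact fun h => by cases h
  have ht1 : t 1 = sr (-1) := by rw [ht, hab]; exact Equiv.swap_apply_left _ _
  have ht2 : t (sr (-1)) = 1 := by rw [ht, hab]; exact Equiv.swap_apply_right _ _
  have htf : ∀ z : DihedralGroup n, z ≠ 1 → z ≠ sr (-1) → t z = z := by
    intro z hz1 hz2
    rw [ht, hab]
    exact Equiv.swap_apply_of_ne_of_ne hz1 hz2
  have hmem : t ∈ cayleyAut (DihedralGroup n) (stdS n) := by
    intro x y
    by_cases hx1 : x = 1
    · subst hx1
      by_cases hy1 : y = 1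
      · subst hy1; rw [ht1]; simp
      · by_cases hys : y = sr (-1)
        · subst hys
          rw [ht1, ht2, sr_inv', inv_one, mul_one, one_mul]
        · rw [ht1, htf y hy1 hys, sr_inv', inv_one, mul_one]
          exact hL y
    · by_cases hxs : x = sr (-1)
      · subst hxs
        by_cases hy1 : y = 1
        · subst hy1
          rw [ht1, ht2, sr_inv', inv_one, mul_one, one_mul]
        · by_cases hys : y = sr (-1)
          · subst hys; rw [ht2]; simp
          · rw [ht2, htf y hy1 hys, sr_inv', inv_one, mul_one]
            exact (hL y).symm
      · rw [htf x hx1 hxs]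
        by_cases hy1 : y = 1
        · subst hy1
          rw [ht1, one_mul]
          exact hL' x⁻¹
        · by_cases hys : y = sr (-1)
          · subst hys
            rw [ht2, one_mul]
            exact (hL' x⁻¹).symm
          · rw [htf y hy1 hys]
  refine ⟨hmem, ?_⟩
  intro hall
  have hp : rightRegHom (DihedralGroup n) (r 1) ∈ rightRegRep (DihedralGroup n) := ⟨r 1, rfl⟩
  obtain ⟨c, hc⟩ := hall t hmem _ hp
  have happ : ∀ x : DihedralGroup n,
      x * c⁻¹ = t ((t⁻¹ x) * (r 1)⁻¹) := by
    intro x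
    have := Equiv.ext_iff.mp hc x
    simpa [rightRegHom, Equiv.Perm.mul_apply] using this
  have htinv : t⁻¹ = t := by rw [ht]; exact Equiv.swap_inv _ _
  have hne21 : (-2 : ZMod n) ≠ -1 := by
    intro h
    apply h1
    linear_combination -h
  have e1 : c⁻¹ = sr (-2 : ZMod n) := by
    have := happ 1
    rw [htinv, ht1, r_inv', sr_mul_r] at this
    have hfix : t (sr (-1 + -1 : ZMod n)) = sr (-1 + -1) := by
      apply htf
      · rw [one_def]; exact fun h => by cases h
      · intro h
        have := DihedralGroup.sr.inj h
        apply hne21; linear_combination this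
    rw [hfix, one_mul] at this
    rw [this]
    norm_num
  have e2 := happ (r 1)
  rw [htinv] at e2
  have hfr : t (r (1 : ZMod n)) = r 1 := by
    apply htf
    · rw [one_def]
      intro h
      exact h1 (DihedralGroup.r.inj h)
    · exact fun h => by cases h
  rw [hfr, r_inv', r_mul_r, add_neg_cancel, ← one_def, ht1, e1, r_mul_sr] at e2
  have := DihedralGroup.sr.inj e2
  apply h2
  linear_combination -this
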